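/- arXiv:1207.0295 — 4 statements merged into one kernel-verified Lean document; each statement's English description precedes it below -/
import Mathlib

section
/- Let v > 0 and for E > 0 set D(E) = 2·cos(√E) + (v/√E)·sin(√E) (the trace of the one-step transfer matrix T(v,E)). Then for every integer l ≥ 1 there exists a constant c_l = c_l(v) with 0 < c_l < (πl)² − (π(l−1))² such that {E > 0 : |D(E)| ≤ 2} = ⋃_{l≥1} [(πl)² − c_l, (πl)²]. In particular, the right endpoints (πl)² of the bands do not depend on v. -/
/-!
With `x = √E`, one has `x² (D² - 4) = sin x · ((v² - 4x²) sin x + 4vx cos x)`, and the second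
factor is `(v² + 4x²) sin ψ(x)` for the phase `ψ(x) = x + 2 arctan (2x / v)` (`bandPhase`).
Hence `|D| ≤ 2` iff `sin x · sin ψ(x) ≤ 0`. The phase is strictly increasing with
`x < ψ(x) < x + π`, so on `((l - 1)π, lπ]`, where `sin x` has a fixed sign, the condition holds
exactly for `x ≥ aₗ`, with `ψ(aₗ) = lπ`. The `l`-th band is therefore `[aₗ², (lπ)²]`.
-/

open Matrix Real Filter MeasureTheory ProbabilityTheory

noncomputable section

/-- Principal branch of the complex square root. -/
def csqrt (z : ℂ) : ℂ := z ^ (1/2 : ℂ)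

/-- One-step transfer matrix of the random Kronig-Penney model at complex energy. -/
def TmatC (v : ℝ) (z : ℂ) : Matrix (Fin 2) (Fin 2) ℂ :=
  !![1, (v : ℂ); 0, 1] *
  !![Complex.cos (csqrt z), -(csqrt z) * Complex.sin (csqrt z);
     Complex.sin (csqrt z) / (csqrt z), Complex.cos (csqrt z)]

/-- One-step transfer matrix at positive real energy. -/
def TmatR (v E : ℝ) : Matrix (Fin 2) (Fin 2) ℝ :=
  !![1, v; 0, 1] *
  !![Real.cos (Real.sqrt E), -(Real.sqrt E) * Real.sin (Real.sqrt E);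
     Real.sin (Real.sqrt E) / Real.sqrt E, Real.cos (Real.sqrt E)]

/-- Euclidean norm of a vector in ℝ². -/
def vnormR (x : Fin 2 → ℝ) : ℝ := ‖(WithLp.equiv 2 (Fin 2 → ℝ)).symm x‖

/-- Euclidean norm of a vector in ℂ². -/
def vnormC (x : Fin 2 → ℂ) : ℝ := ‖(WithLp.equiv 2 (Fin 2 → ℂ)).symm x‖

/-- Operator norm of a real 2×2 matrix w.r.t. the Euclidean norm. -/
def opR (A : Matrix (Fin 2) (Fin 2) ℝ) : ℝ :=
  ‖LinearMap.toContinuousLinearMap (Matrix.toEuclideanLin A)‖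

/-- Operator norm of a complex 2×2 matrix w.r.t. the Euclidean norm. -/
def opC (A : Matrix (Fin 2) (Fin 2) ℂ) : ℝ :=
  ‖LinearMap.toContinuousLinearMap (Matrix.toEuclideanLin A)‖

/-- The unit vector with angle θ. -/
def eth (θ : ℝ) : Fin 2 → ℝ := ![Real.cos θ, Real.sin θ]

/-- The circle map S_A on [0, 2π) induced by an (invertible) matrix A. -/
def SMap (A : Matrix (Fin 2) (Fin 2) ℝ) (θ : ℝ) : ℝ :=
  toIcoMod Real.two_pi_pos 0
    (Complex.arg (Complex.mk ((A.mulVec (eth θ)) 0) ((A.mulVec (eth θ)) 1)))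

/-- critical energy -/
def El (l : ℕ) : ℝ := (Real.pi * l) ^ 2

/-- transfer matrix product T^E(n,m) = T(v_n) ⋯ T(v_{m+1}), real energy, ℕ indices. -/
def TprodR (v : ℕ → ℝ) (E : ℝ) (n m : ℕ) : Matrix (Fin 2) (Fin 2) ℝ :=
  ((List.range (n - m)).map fun k => TmatR (v (n - k)) E).prod

/-- transfer matrix product, complex energy, ℤ indices. -/
def TprodZC (v : ℤ → ℝ) (z : ℂ) (n m : ℤ) : Matrix (Fin 2) (Fin 2) ℂ :=
  ((List.range (n - m).toNat).map fun k => TmatC (v (n - k)) z).prod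

/-- The basis change matrix M^ε = M₂ · M₁. -/
def Meps (vb : ℝ) (l : ℕ) (ε : ℝ) : Matrix (Fin 2) (Fin 2) ℝ :=
  (let b : ℝ := (vb * El l / 2) ^ ((1 : ℝ)/4)
   !![1/(2*b), -b; 1/(2*b), b]) * !![Real.sqrt ε, 0; 0, 1]

/-- Rotation matrix by angle β. -/
def Rot (β : ℝ) : Matrix (Fin 2) (Fin 2) ℝ :=
  !![Real.cos β, -Real.sin β; Real.sin β, Real.cos β]

/-- Modified Prüfer phases. -/
def pruefer (vb : ℝ) (l : ℕ) (ε : ℝ) (v : ℕ → ℝ) (θ₀ : ℝ) : ℕ → ℝ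
  | 0 => θ₀
  | n + 1 =>
      SMap (Meps vb l ε * TmatR (v (n + 1)) (El l - ε) * (Meps vb l ε)⁻¹)
        (pruefer vb l ε v θ₀ n)

open Set

namespace KronigPenney

theorem sin_two_mul_arctan (t : ℝ) : sin (2 * arctan t) = 2 * t / (1 + t ^ 2) := by
  have h : (0 : ℝ) < 1 + t ^ 2 := by positivity
  rw [sin_two_mul, sin_arctan, cos_arctan]
  field_simp
  rw [sq_sqrt h.le]

theorem cos_two_mul_arctan (t : ℝ) : cos (2 * arctan t) = (1 - t ^ 2) / (1 + t ^ 2) := by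
  have h : (0 : ℝ) < 1 + t ^ 2 := by positivity
  rw [cos_two_mul, cos_arctan, div_pow, one_pow, sq_sqrt h.le]
  field_simp
  ring

theorem pi_mul_sub_one_nonneg {l : ℕ} (hl : 1 ≤ l) : 0 ≤ π * ((l : ℝ) - 1) :=
  mul_nonneg pi_pos.le (sub_nonneg.2 (Nat.one_le_cast.2 hl))

theorem sin_nonpos_iff_pi_le {u : ℝ} (h₀ : 0 < u) (h₂ : u < 2 * π) : sin u ≤ 0 ↔ π ≤ u := by
  refine ⟨fun h => le_of_not_gt fun hu => (sin_pos_of_pos_of_lt_pi h₀ hu).not_ge h, fun hu => ?_⟩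
  rw [← sin_sub_two_pi]
  exact sin_nonpos_of_nonpos_of_neg_pi_le (by linarith) (by linarith)

theorem sin_mul_sin_nonpos_iff {n : ℤ} {x y : ℝ} (hx : x ∈ Ioo (n * π) (n * π + π))
    (hy : y ∈ Ioo (n * π) (n * π + 2 * π)) : sin x * sin y ≤ 0 ↔ n * π + π ≤ y := by
  have hsign : (-1 : ℝ) ^ n * (-1) ^ n = 1 := by rw [← mul_zpow]; norm_num
  have hshift : sin x * sin y = sin (x - n * π) * sin (y - n * π) := by
    rw [sin_sub_int_mul_pi, sin_sub_int_mul_pi]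
    linear_combination -(sin x * sin y) * hsign
  have hpos : 0 < sin (x - n * π) :=
    sin_pos_of_pos_of_lt_pi (by linarith [hx.1]) (by linarith [hx.2])
  rw [hshift, ← mul_zero (sin (x - n * π)), mul_le_mul_iff_right₀ hpos,
    sin_nonpos_iff_pi_le (by linarith [hy.1]) (by linarith [hy.2]), le_sub_iff_add_le']

def bandPhase (v x : ℝ) : ℝ := x + 2 * arctan (2 * x / v)

section bandPhase

variable {v : ℝ}

theorem continuous_bandPhase (v : ℝ) : Continuous (bandPhase v) := by
  unfold bandPhase
  fun_prop

theorem strictMono_bandPhase (hv : 0 < v) : StrictMono (bandPhase v) := fun a b hab => by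
  have : arctan (2 * a / v) < arctan (2 * b / v) :=
    arctan_strictMono (div_lt_div_of_pos_right (by linarith) hv)
  unfold bandPhase
  linarith

theorem bandPhase_mem_Ioo (v x : ℝ) : bandPhase v x ∈ Ioo (x - π) (x + π) := by
  have := neg_pi_div_two_lt_arctan (2 * x / v)
  have := arctan_lt_pi_div_two (2 * x / v)
  constructor <;> unfold bandPhase <;> linarith

theorem lt_bandPhase (hv : 0 < v) {x : ℝ} (hx : 0 < x) : x < bandPhase v x := by
  have : 0 < arctan (2 * x / v) := arctan_zero ▸ arctan_strictMono (by positivity)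
  unfold bandPhase
  linarith

theorem surjective_bandPhase (v : ℝ) : Function.Surjective (bandPhase v) := fun t => by
  have h₁ := (bandPhase_mem_Ioo v (t - π)).2
  have h₂ := (bandPhase_mem_Ioo v (t + π)).1
  obtain ⟨a, -, ha⟩ := intermediate_value_Icc (by linarith [pi_pos])
    (continuous_bandPhase v).continuousOn
    (show t ∈ Icc (bandPhase v (t - π)) (bandPhase v (t + π)) from
      ⟨by linarith, by linarith⟩)
  exact ⟨a, ha⟩

theorem mem_Ioo_of_bandPhase_eq (hv : 0 < v) {a t : ℝ} (ht : 0 < t) (ha : bandPhase v a = t) :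
    a ∈ Ioo (t - π) t := by
  refine ⟨by linarith [(bandPhase_mem_Ioo v a).2], lt_of_not_ge fun hta => ?_⟩
  have := (strictMono_bandPhase hv).monotone hta
  linarith [lt_bandPhase hv ht]

theorem mem_Ioo_of_bandPhase_eq_pi_mul (hv : 0 < v) {l : ℕ} (hl : 1 ≤ l) {a : ℝ}
    (ha : bandPhase v a = π * l) : a ∈ Ioo (π * (l - 1)) (π * l) := by
  have : 0 < (l : ℝ) := by exact_mod_cast hl
  simpa only [mul_sub, mul_one] using mem_Ioo_of_bandPhase_eq hv (by positivity) ha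

theorem sq_add_mul_sin_bandPhase (hv : v ≠ 0) (x : ℝ) :
    (v ^ 2 + 4 * x ^ 2) * sin (bandPhase v x) =
      (v ^ 2 - 4 * x ^ 2) * sin x + 4 * v * x * cos x := by
  have h : 1 + (2 * x / v) ^ 2 = (v ^ 2 + 4 * x ^ 2) / v ^ 2 := by field_simp; ring
  have : v ^ 2 + 4 * x ^ 2 ≠ 0 := by positivity
  rw [bandPhase, sin_add, sin_two_mul_arctan, cos_two_mul_arctan, h]
  field_simp
  ring

theorem abs_two_mul_cos_add_le_two_iff (hv : v ≠ 0) {x : ℝ} (hx : 0 < x) :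
    |2 * cos x + v / x * sin x| ≤ 2 ↔ sin x * sin (bandPhase v x) ≤ 0 := by
  have key : x ^ 2 * ((2 * cos x + v / x * sin x) ^ 2 - 2 ^ 2) =
      (v ^ 2 + 4 * x ^ 2) * (sin x * sin (bandPhase v x)) := by
    rw [mul_left_comm, sq_add_mul_sin_bandPhase hv]
    field_simp
    linear_combination (4 * x ^ 2) * sin_sq_add_cos_sq x
  calc |2 * cos x + v / x * sin x| ≤ 2
      ↔ x ^ 2 * ((2 * cos x + v / x * sin x) ^ 2 - 2 ^ 2) ≤ x ^ 2 * 0 := by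
        rw [mul_le_mul_iff_right₀ (by positivity), sub_nonpos, sq_le_sq, abs_two]
    _ ↔ (v ^ 2 + 4 * x ^ 2) * (sin x * sin (bandPhase v x)) ≤ (v ^ 2 + 4 * x ^ 2) * 0 := by
        rw [key, mul_zero, mul_zero]
    _ ↔ sin x * sin (bandPhase v x) ≤ 0 := mul_le_mul_iff_right₀ (by positivity)

theorem abs_two_mul_cos_add_le_two_iff_le (hv : 0 < v) {l : ℕ} (hl : 1 ≤ l) {a x : ℝ}
    (ha : bandPhase v a = π * l) (hx : x ∈ Ioc (π * (l - 1)) (π * l)) :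
    |2 * cos x + v / x * sin x| ≤ 2 ↔ a ≤ x := by
  have ha_mem := mem_Ioo_of_bandPhase_eq_pi_mul hv hl ha
  have hx₀ : 0 < x := (pi_mul_sub_one_nonneg hl).trans_lt hx.1
  rw [abs_two_mul_cos_add_le_two_iff hv.ne' hx₀]
  rcases hx.2.eq_or_lt with rfl | hlt
  · exact iff_of_true (by rw [mul_comm π, sin_nat_mul_pi, zero_mul]) ha_mem.2.le
  have hn : (((l : ℤ) - 1 : ℤ) : ℝ) * π = π * (l - 1) := by push_cast; ring
  have hψ := bandPhase_mem_Ioo v x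
  rw [sin_mul_sin_nonpos_iff (n := l - 1), hn, show π * (l - 1) + π = π * l by ring, ← ha,
    (strictMono_bandPhase hv).le_iff_le]
  · rw [hn]
    exact ⟨hx.1, by linarith⟩
  · rw [hn]
    exact ⟨by linarith [hx.1, lt_bandPhase hv hx₀], by linarith [hψ.2]⟩

end bandPhase

theorem exists_nat_mem_Ioc_pi_mul {x : ℝ} (hx : 0 < x) :
    ∃ l : ℕ, 1 ≤ l ∧ x ∈ Ioc (π * (l - 1)) (π * l) := by
  refine ⟨⌈x / π⌉₊, Nat.one_le_ceil_iff.2 (by positivity), ?_, ?_⟩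
  · have := Nat.ceil_lt_add_one (div_pos hx pi_pos).le
    rw [← lt_div_iff₀' pi_pos]
    linarith
  · rw [← div_le_iff₀' pi_pos]
    exact Nat.le_ceil _

theorem pos_and_abs_le_two_iff_exists_mem_Icc {v : ℝ} (hv : 0 < v) {a : ℕ → ℝ}
    (ha : ∀ l : ℕ, bandPhase v (a l) = π * l) (E : ℝ) :
    0 < E ∧ |2 * cos √E + v / √E * sin √E| ≤ 2 ↔
      ∃ l : ℕ, 1 ≤ l ∧ E ∈ Icc (a l ^ 2) ((π * l) ^ 2) := by
  constructor
  · rintro ⟨hE, hband⟩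
    obtain ⟨l, hl, hx⟩ := exists_nat_mem_Ioc_pi_mul (sqrt_pos.2 hE)
    have ha_pos :=
      (pi_mul_sub_one_nonneg hl).trans_lt (mem_Ioo_of_bandPhase_eq_pi_mul hv hl (ha l)).1
    have hlo := (abs_two_mul_cos_add_le_two_iff_le hv hl (ha l) hx).1 hband
    exact ⟨l, hl, (le_sqrt' ha_pos).1 hlo, (sqrt_le_left (by positivity)).1 hx.2⟩
  · rintro ⟨l, hl, hlo, hhi⟩
    have ha_mem := mem_Ioo_of_bandPhase_eq_pi_mul hv hl (ha l)
    have ha_pos : 0 < a l := (pi_mul_sub_one_nonneg hl).trans_lt ha_mem.1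
    have hlo' : a l ≤ √E := (le_sqrt' ha_pos).2 hlo
    refine ⟨(pow_pos ha_pos 2).trans_le hlo,
      (abs_two_mul_cos_add_le_two_iff_le hv hl (ha l) ?_).2 hlo'⟩
    exact ⟨ha_mem.1.trans_le hlo', (sqrt_le_left (by positivity)).2 hhi⟩

end KronigPenney

open KronigPenney

/-- band structure of the periodic Kronig-Penney model. -/
theorem stmt2 (v : ℝ) (hv : 0 < v) :
    ∃ c : ℕ → ℝ,
      (∀ l : ℕ, 1 ≤ l →
        0 < c l ∧ c l < (π * l) ^ 2 - (π * ((l : ℝ) - 1)) ^ 2) ∧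
      {E : ℝ | 0 < E ∧
          |2 * Real.cos (Real.sqrt E) + (v / Real.sqrt E) * Real.sin (Real.sqrt E)| ≤ 2}
        = ⋃ (l : ℕ) (_ : 1 ≤ l), Set.Icc ((π * l) ^ 2 - c l) ((π * l) ^ 2) := by
  choose a ha using fun l : ℕ => surjective_bandPhase v (π * l)
  refine ⟨fun l => (π * l) ^ 2 - a l ^ 2, fun l hl => ?_, ?_⟩
  · obtain ⟨h₁, h₂⟩ := mem_Ioo_of_bandPhase_eq_pi_mul hv hl (ha l)
    have := pi_mul_sub_one_nonneg hl
    constructor <;> nlinarith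
  ext E
  simpa only [mem_ofPred_eq, mem_iUnion, sub_sub_cancel, exists_prop] using
    pos_and_abs_le_two_iff_exists_mem_Icc hv ha E

end
end

section
/- Let N ≥ 1 be an integer, let A_1,…,A_N and R_1,…,R_N be complex 2×2 matrices, and let κ ∈ ℂ. Set B_n = A_n + κ·R_n for each n, let c₁ = max over all 0 ≤ m ≤ n ≤ N of ‖A_n·A_{n−1}⋯A_{m+1}‖ (empty products being the identity), and let c₂ = max_{1≤n≤N} ‖R_n‖. If |κ|·c₁·c₂·N < 1, then max over all 0 ≤ m ≤ n ≤ N of ‖B_n·B_{n−1}⋯B_{m+1}‖ ≤ c₁/(1 − |κ|·c₁·c₂·N). -/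
/-! Write `B(n,m)` and `A(n,m)` for the perturbed and unperturbed products. Duhamel's formula
`B(n,m) = A(n,m) + ∑_{m ≤ j < n} A(n,j+1) (κ R_{j+1}) B(j,m)` expresses `B(n,m)` through the
shorter products `B(j,m)`. If these are bounded by `C = c₁ / (1 - |κ| c₁ c₂ N)`, the formula
bounds `B(n,m)` by `c₁ + N c₁ |κ| c₂ C = C`, so the bound propagates by strong induction on `n`. -/

open Matrix Real Filter MeasureTheory ProbabilityTheory

noncomputable section

/-- Product A_n · A_{n-1} ⋯ A_{m+1} of a sequence of 2×2 complex matrices. -/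
def matProd (A : ℕ → Matrix (Fin 2) (Fin 2) ℂ) (n m : ℕ) : Matrix (Fin 2) (Fin 2) ℂ :=
  ((List.range (n - m)).map fun k => A (n - k)).prod

section DescProd

variable {M : Type*}

/-- `descProd a n m = a n * a (n - 1) * ⋯ * a (m + 1)`, and `1` when `n ≤ m`. -/
def descProd [Monoid M] (a : ℕ → M) (n m : ℕ) : M :=
  ((List.range (n - m)).map fun k => a (n - k)).prod

@[simp]
lemma descProd_self [Monoid M] (a : ℕ → M) (m : ℕ) : descProd a m m = 1 := by
  simp [descProd]

lemma descProd_succ [Monoid M] (a : ℕ → M) {m n : ℕ} (h : m ≤ n) :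
    descProd a (n + 1) m = a (n + 1) * descProd a n m := by
  rw [descProd, descProd, show n + 1 - m = n - m + 1 by omega, List.range_succ_eq_map,
    List.map_cons, List.prod_cons, List.map_map]
  simp only [Nat.sub_zero, Function.comp_def, Nat.succ_sub_succ]

lemma map_descProd {N F : Type*} [Monoid M] [Monoid N] [FunLike F M N] [MonoidHomClass F M N]
    (f : F) (a : ℕ → M) (n m : ℕ) : f (descProd a n m) = descProd (fun j => f (a j)) n m := by
  simp only [descProd, map_list_prod, List.map_map]
  rfl

lemma descProd_add [Ring M] (a r : ℕ → M) {m n : ℕ} (h : m ≤ n) :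
    descProd (a + r) n m = descProd a n m +
      ∑ j ∈ Finset.Ico m n, descProd a n (j + 1) * r (j + 1) * descProd (a + r) j m := by
  induction n, h using Nat.le_induction with
  | base => simp
  | succ n hmn ih =>
    have hterm : ∀ j ∈ Finset.Ico m n,
        a (n + 1) * (descProd a n (j + 1) * r (j + 1) * descProd (a + r) j m) =
          descProd a (n + 1) (j + 1) * r (j + 1) * descProd (a + r) j m := by
      intro j hj
      rw [descProd_succ a (Finset.mem_Ico.1 hj).2, mul_assoc, mul_assoc, mul_assoc]
    calc descProd (a + r) (n + 1) m
        = a (n + 1) * descProd (a + r) n m + r (n + 1) * descProd (a + r) n m := by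
          rw [descProd_succ _ hmn, Pi.add_apply, add_mul]
      _ = (descProd a (n + 1) m + ∑ j ∈ Finset.Ico m n,
              descProd a (n + 1) (j + 1) * r (j + 1) * descProd (a + r) j m) +
            descProd a (n + 1) (n + 1) * r (n + 1) * descProd (a + r) n m := by
          rw [descProd_self, one_mul]
          congr 1
          rw [ih, mul_add, Finset.mul_sum, Finset.sum_congr rfl hterm, descProd_succ a hmn]
      _ = _ := by rw [Finset.sum_Ico_succ_top hmn, add_assoc]

theorem norm_descProd_add_le [SeminormedRing M] (a r : ℕ → M) {N : ℕ} {c δ : ℝ}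
    (ha : ∀ m n, m ≤ n → n ≤ N → ‖descProd a n m‖ ≤ c)
    (hr : ∀ n, 1 ≤ n → n ≤ N → ‖r n‖ ≤ δ) (hδ : 0 ≤ δ) (hsmall : c * δ * N < 1)
    {m n : ℕ} (hmn : m ≤ n) (hnN : n ≤ N) :
    ‖descProd (a + r) n m‖ ≤ c / (1 - c * δ * N) := by
  set C := c / (1 - c * δ * N)
  have hc : 0 ≤ c := (norm_nonneg _).trans (ha 0 0 le_rfl N.zero_le)
  have hgap : 0 < 1 - c * δ * N := by linarith
  have hC : 0 ≤ C := div_nonneg hc hgap.le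
  have hfix : c + N * (c * δ * C) = C := by
    have hCgap : C * (1 - c * δ * N) = c := div_mul_cancel₀ c hgap.ne'
    linear_combination -hCgap
  induction n using Nat.strong_induction_on with
  | _ n ih =>
    have hterm : ∀ j ∈ Finset.Ico m n,
        ‖descProd a n (j + 1) * r (j + 1) * descProd (a + r) j m‖ ≤ c * δ * C := by
      intro j hj
      obtain ⟨hmj, hjn⟩ := Finset.mem_Ico.1 hj
      refine norm_mul₃_le.trans ?_
      gcongr
      · exact ha _ _ hjn hnN
      · exact hr _ (by omega) (by omega)
      · exact ih j hjn hmj (by omega)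
    calc ‖descProd (a + r) n m‖
        ≤ ‖descProd a n m‖ + ∑ j ∈ Finset.Ico m n,
            ‖descProd a n (j + 1) * r (j + 1) * descProd (a + r) j m‖ := by
          rw [descProd_add a r hmn]
          exact (norm_add_le _ _).trans (by gcongr; exact norm_sum_le _ _)
      _ ≤ c + (n - m : ℕ) * (c * δ * C) := by
          rw [← nsmul_eq_mul, ← Nat.card_Ico, ← Finset.sum_const]
          exact add_le_add (ha m n hmn hnN) (Finset.sum_le_sum hterm)
      _ ≤ c + N * (c * δ * C) := by
          gcongr
          omega
      _ = C := hfix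

end DescProd

lemma opC_matProd (B : ℕ → Matrix (Fin 2) (Fin 2) ℂ) (n m : ℕ) :
    opC (matProd B n m) = ‖descProd (fun j => Matrix.toEuclideanCLM (𝕜 := ℂ) (B j)) n m‖ := by
  rw [← map_descProd]
  rfl

lemma opC_smul_le (κ : ℂ) (R : Matrix (Fin 2) (Fin 2) ℂ) :
    ‖κ • Matrix.toEuclideanCLM (𝕜 := ℂ) R‖ ≤ ‖κ‖ * opC R :=
  (norm_smul_le κ (Matrix.toEuclideanCLM (𝕜 := ℂ) R)).trans_eq rfl

/-- perturbation bound for products of matrices. -/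
theorem stmt3 (N : ℕ) (hN : 1 ≤ N) (A R : ℕ → Matrix (Fin 2) (Fin 2) ℂ) (κ : ℂ)
    (c₁ c₂ : ℝ)
    (hc1 : ∀ m n : ℕ, m ≤ n → n ≤ N → opC (matProd A n m) ≤ c₁)
    (hc2 : ∀ n : ℕ, 1 ≤ n → n ≤ N → opC (R n) ≤ c₂)
    (hsmall : ‖κ‖ * c₁ * c₂ * N < 1) :
    ∀ m n : ℕ, m ≤ n → n ≤ N →
      opC (matProd (fun j => A j + κ • R j) n m)
        ≤ c₁ / (1 - ‖κ‖ * c₁ * c₂ * N) := by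
  intro m n hmn hnN
  have hc₂ : 0 ≤ c₂ := (norm_nonneg _).trans (hc2 1 le_rfl hN)
  have hperturb (j : ℕ) (h1 : 1 ≤ j) (hj : j ≤ N) :
      ‖κ • Matrix.toEuclideanCLM (𝕜 := ℂ) (R j)‖ ≤ ‖κ‖ * c₂ :=
    (opC_smul_le κ (R j)).trans (mul_le_mul_of_nonneg_left (hc2 j h1 hj) (norm_nonneg κ))
  have hsmall' : c₁ * (‖κ‖ * c₂) * N < 1 := by convert hsmall using 1; ring
  have key := norm_descProd_add_le (fun j => Matrix.toEuclideanCLM (𝕜 := ℂ) (A j))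
    (fun j => κ • Matrix.toEuclideanCLM (𝕜 := ℂ) (R j))
    (fun m n hmn hnN => (opC_matProd A n m).symm.trans_le (hc1 m n hmn hnN)) hperturb
    (mul_nonneg (norm_nonneg κ) hc₂) hsmall' hmn hnN
  have hsum : (fun j => Matrix.toEuclideanCLM (𝕜 := ℂ) (A j + κ • R j)) =
      (fun j => Matrix.toEuclideanCLM (𝕜 := ℂ) (A j)) +
        fun j => κ • Matrix.toEuclideanCLM (𝕜 := ℂ) (R j) := by
    funext j
    simp
  rwa [opC_matProd, hsum, show ‖κ‖ * c₁ * c₂ * N = c₁ * (‖κ‖ * c₂) * N by ring]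

end
end

section
/- Let l ≥ 1 be an even integer, E_l = (πl)², and let K ⊂ ℝ be compact. There exist ε₀ > 0 and a constant C such that for all v ∈ K and all 0 < ε ≤ ε₀: ‖T(v, E_l − ε) − [[1, v],[0, 1]]·(I + ε·[[0, 1/2],[−1/(2E_l), 0]])‖ ≤ C·ε². -/
open Matrix Real Filter MeasureTheory ProbabilityTheory

noncomputable section

/-!
Since `T(v, E) = [[1, v], [0, 1]] · T(0, E)` and the shear factor is bounded for `v ∈ K`, it
suffices to expand `T(0, p² - ε)` with `p = π l`. Put `k = √(p² - ε)` and `δ = p - k`. Then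
`δ (p + k) = ε`, so `δ = O(ε)`; and `cos p = 1` because `l` is even, so `cos k = cos δ` and
`sin k = -sin δ`. Up to bounded factors every entry of the error matrix becomes a combination of
`δ²`, `1 - cos δ` and `sin δ - δ`, all of which are `O(ε²)`.
-/

open Asymptotics Topology
open scoped Matrix.Norms.L2Operator

lemma EuclideanSpace.norm_le_sum_norm {𝕜 ι : Type*} [RCLike 𝕜] [Fintype ι]
    (x : EuclideanSpace 𝕜 ι) : ‖x‖ ≤ ∑ i, ‖x i‖ := by
  rw [EuclideanSpace.norm_eq]
  exact Real.sqrt_le_iff.2 ⟨by positivity,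
    Finset.sum_sq_le_sq_sum_of_nonneg fun i _ => norm_nonneg (x i)⟩

lemma Matrix.l2_opNorm_le_sum_norm {𝕜 m n : Type*} [RCLike 𝕜] [Fintype m] [Fintype n]
    [DecidableEq n] (A : Matrix m n 𝕜) : ‖A‖ ≤ ∑ i, ∑ j, ‖A i j‖ := by
  rw [Matrix.l2_opNorm_def]
  refine ContinuousLinearMap.opNorm_le_bound _ (by positivity) fun x => ?_
  calc _ ≤ ∑ i, ‖(A *ᵥ x) i‖ := EuclideanSpace.norm_le_sum_norm _
    _ ≤ ∑ i, ∑ j, ‖A i j‖ * ‖x‖ := by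
      gcongr with i
      refine (norm_sum_le _ _).trans (Finset.sum_le_sum fun j _ => ?_)
      rw [norm_mul]
      gcongr
      exact PiLp.norm_apply_le x j
    _ = _ := by simp only [← Finset.sum_mul]

lemma opR_eq_norm (A : Matrix (Fin 2) (Fin 2) ℝ) : opR A = ‖A‖ := rfl

lemma Matrix.isBigO_of_forall_isBigO_apply {α 𝕜 m n F : Type*} [RCLike 𝕜] [Fintype m]
    [Fintype n] [DecidableEq n] [Norm F] {l : Filter α} {f : α → Matrix m n 𝕜} {g : α → F}
    (h : ∀ i j, (fun x => f x i j) =O[l] g) : f =O[l] g :=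
  (IsBigO.of_norm_eventuallyLE (.of_forall fun x => (f x).l2_opNorm_le_sum_norm)).trans
    (IsBigO.fun_sum fun i _ => IsBigO.fun_sum fun j _ => (h i j).norm_left)

lemma exists_forall_norm_le_of_isBigO {E : Type*} [SeminormedAddCommGroup E] {f : ℝ → E}
    (h : f =O[𝓝 0] (· ^ 2)) : ∃ ε₀ > 0, ∃ C, ∀ ε, 0 < ε → ε ≤ ε₀ → ‖f ε‖ ≤ C * ε ^ 2 := by
  obtain ⟨C, hC⟩ := h.bound
  obtain ⟨r, hr, hball⟩ := Metric.eventually_nhds_iff.1 hC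
  refine ⟨r / 2, half_pos hr, C, fun ε hε hεr => ?_⟩
  simpa [sq_abs] using @hball ε (by rw [Real.dist_0_eq_abs, abs_of_pos hε]; linarith)

lemma isBigO_cos_sub_one : (fun x => cos x - 1) =O[𝓝 0] (· ^ 2) :=
  IsBigO.of_bound (1 / 2) (Eventually.of_forall fun x => by
    rw [Real.norm_eq_abs, abs_sub_comm, abs_of_nonneg (by linarith [cos_le_one x]), norm_pow,
      Real.norm_eq_abs, sq_abs]
    linarith [one_sub_sq_div_two_le_cos (x := x)])

lemma isBigO_sin_sub_self : (fun x => sin x - x) =O[𝓝 0] (· ^ 2) :=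
  (IsBigO.of_bound (1 / 6) (Eventually.of_forall fun x => by
    rw [Real.norm_eq_abs, abs_sub_comm, norm_pow, Real.norm_eq_abs]
    linarith [abs_sub_sin_le x])).trans (isLittleO_pow_pow (by norm_num : 2 < 3)).isBigO

lemma cos_sub_of_cos_eq_one {p : ℝ} (hcos : cos p = 1) (x : ℝ) : cos (p - x) = cos x := by
  simp [cos_sub, hcos, sin_eq_zero_iff_cos_eq.2 (Or.inl hcos)]

lemma sin_sub_of_cos_eq_one {p : ℝ} (hcos : cos p = 1) (x : ℝ) : sin (p - x) = -sin x := by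
  simp [sin_sub, hcos, sin_eq_zero_iff_cos_eq.2 (Or.inl hcos)]

section WaveNumber

variable {p : ℝ} {k : ℝ → ℝ} (hp : 0 < p) (hk : Tendsto k (𝓝 0) (𝓝 p))
  (hsq : ∀ᶠ ε in 𝓝 0, k ε ^ 2 = p ^ 2 - ε)

include hsq in
lemma eventually_sub_mul_add_eq : ∀ᶠ ε in 𝓝 0, (p - k ε) * (p + k ε) = ε := by
  filter_upwards [hsq] with ε hε
  linear_combination (-1 : ℝ) * hε

include hp hk hsq

lemma isBigO_sub_of_sq_eq : (fun ε => p - k ε) =O[𝓝 0] (fun ε => ε) := by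
  have hinv : (fun ε => (p + k ε)⁻¹) =O[𝓝 0] (fun _ => (1 : ℝ)) :=
    ((tendsto_const_nhds.add hk).inv₀ (by linarith)).isBigO_one ℝ
  refine IsBigO.congr' (by simpa using (isBigO_refl (fun ε : ℝ => ε) (𝓝 0)).mul hinv) ?_ .rfl
  filter_upwards [eventually_sub_mul_add_eq hsq, hk.eventually (eventually_gt_nhds hp)]
    with ε hε hkpos
  rw [eq_comm, eq_mul_inv_iff_mul_eq₀ (by linarith), hε]

lemma isBigO_sub_sq_of_sq_eq : (fun ε => (p - k ε) ^ 2) =O[𝓝 0] (· ^ 2) :=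
  (isBigO_sub_of_sq_eq hp hk hsq).pow 2

lemma isBigO_sin_sub_sub_of_sq_eq :
    (fun ε => sin (p - k ε) - (p - k ε)) =O[𝓝 0] (· ^ 2) :=
  (isBigO_sin_sub_self.comp_tendsto ((isBigO_sub_of_sq_eq hp hk hsq).trans_tendsto
    tendsto_id)).trans (isBigO_sub_sq_of_sq_eq hp hk hsq)

variable (hcos : cos p = 1)
include hcos

lemma isBigO_cos_sub_one_of_sq_eq : (fun ε => cos (k ε) - 1) =O[𝓝 0] (· ^ 2) := by
  refine ((isBigO_cos_sub_one.comp_tendsto ((isBigO_sub_of_sq_eq hp hk hsq).trans_tendsto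
    tendsto_id)).trans (isBigO_sub_sq_of_sq_eq hp hk hsq)).congr_left fun ε => ?_
  simp [cos_sub_of_cos_eq_one hcos]

lemma isBigO_neg_mul_sin_sub_half_of_sq_eq :
    (fun ε => -(k ε * sin (k ε)) - ε / 2) =O[𝓝 0] (· ^ 2) := by
  have hmain : (fun ε => k ε * (sin (p - k ε) - (p - k ε)) - 1 / 2 * (p - k ε) ^ 2)
      =O[𝓝 0] (· ^ 2) :=
    IsBigO.sub (by simpa using (hk.isBigO_one ℝ).mul (isBigO_sin_sub_sub_of_sq_eq hp hk hsq))
      ((isBigO_sub_sq_of_sq_eq hp hk hsq).const_mul_left _)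
  refine hmain.congr' ?_ .rfl
  filter_upwards [eventually_sub_mul_add_eq hsq] with ε hε
  rw [sin_sub_of_cos_eq_one hcos]
  linear_combination -hε / 2

lemma isBigO_sin_div_add_of_sq_eq :
    (fun ε => sin (k ε) / k ε + ε / (2 * p ^ 2)) =O[𝓝 0] (· ^ 2) := by
  have hfactor : Tendsto (fun ε => (k ε + 2 * p) / (2 * p ^ 2 * k ε)) (𝓝 0)
      (𝓝 ((p + 2 * p) / (2 * p ^ 2 * p))) :=
    (hk.add tendsto_const_nhds).div (tendsto_const_nhds.mul hk) (by positivity)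
  have hmain : (fun ε => -((k ε)⁻¹ * (sin (p - k ε) - (p - k ε)))
      - (k ε + 2 * p) / (2 * p ^ 2 * k ε) * (p - k ε) ^ 2) =O[𝓝 0] (· ^ 2) :=
    IsBigO.sub (IsBigO.neg_left (by
      simpa using ((hk.inv₀ hp.ne').isBigO_one ℝ).mul (isBigO_sin_sub_sub_of_sq_eq hp hk hsq)))
      (by simpa using (hfactor.isBigO_one ℝ).mul (isBigO_sub_sq_of_sq_eq hp hk hsq))
  refine hmain.congr' ?_ .rfl
  filter_upwards [eventually_sub_mul_add_eq hsq, hk.eventually_ne hp.ne'] with ε hε hk0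
  rw [sin_sub_of_cos_eq_one hcos]
  field_simp
  linear_combination k ε * hε

end WaveNumber

lemma TmatR_eq_mul (v E : ℝ) : TmatR v E = !![1, v; 0, 1] * TmatR 0 E := by
  simp [TmatR, ← Matrix.one_fin_two]

lemma norm_shear_le (v : ℝ) : ‖!![1, v; 0, 1]‖ ≤ 2 + |v| := by
  refine (Matrix.l2_opNorm_le_sum_norm _).trans_eq ?_
  simp only [of_apply, cons_val', cons_val_fin_one, cons_val_zero, cons_val_one, norm_eq_abs,
    Fin.sum_univ_two, abs_one, abs_zero]
  ring

lemma isBigO_TmatR_zero_sq_sub {p : ℝ} (hp : 0 < p) (hcos : cos p = 1) :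
    (fun ε => TmatR 0 (p ^ 2 - ε) - (1 + ε • !![0, 1/2; -(1/(2 * p ^ 2)), 0]))
      =O[𝓝 0] (· ^ 2) := by
  have hk : Tendsto (fun ε => √(p ^ 2 - ε)) (𝓝 0) (𝓝 p) := by
    have := ((continuous_const.sub continuous_id).sqrt (f := fun ε : ℝ => p ^ 2 - ε)).tendsto 0
    rwa [sub_zero, Real.sqrt_sq hp.le] at this
  have hsq : ∀ᶠ ε in 𝓝 0, √(p ^ 2 - ε) ^ 2 = p ^ 2 - ε :=
    (eventually_lt_nhds (show (0 : ℝ) < p ^ 2 by positivity)).mono fun ε hε =>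
      Real.sq_sqrt (by linarith)
  refine Matrix.isBigO_of_forall_isBigO_apply fun i j => ?_
  fin_cases i <;> fin_cases j
  · simpa [TmatR] using isBigO_cos_sub_one_of_sq_eq hp hk hsq hcos
  · simpa [TmatR, div_eq_mul_inv] using isBigO_neg_mul_sin_sub_half_of_sq_eq hp hk hsq hcos
  · simpa [TmatR, div_eq_mul_inv, mul_comm] using isBigO_sin_div_add_of_sq_eq hp hk hsq hcos
  · simpa [TmatR] using isBigO_cos_sub_one_of_sq_eq hp hk hsq hcos

/-- first-order expansion of the transfer matrix below the critical energy. -/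
theorem stmt4 (l : ℕ) (hl : 1 ≤ l) (hleven : Even l) (K : Set ℝ) (hK : IsCompact K) :
    ∃ ε₀ > (0:ℝ), ∃ C : ℝ, ∀ v ∈ K, ∀ ε : ℝ, 0 < ε → ε ≤ ε₀ →
      opR (TmatR v (El l - ε) -
          !![1, v; 0, 1] * (1 + ε • !![0, 1/2; -(1/(2 * El l)), 0]))
        ≤ C * ε ^ 2 := by
  have hp : 0 < π * l := mul_pos pi_pos (Nat.cast_pos.2 hl)
  have hcos : cos (π * l) = 1 := by rw [mul_comm, cos_nat_mul_pi, hleven.neg_one_pow]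
  obtain ⟨ε₀, hε₀, C, hC⟩ := exists_forall_norm_le_of_isBigO (isBigO_TmatR_zero_sq_sub hp hcos)
  obtain ⟨R, hR⟩ := hK.exists_bound_of_continuousOn continuousOn_id
  refine ⟨ε₀, hε₀, (2 + R) * C, fun v hv ε hε hεε₀ => ?_⟩
  have hshear : ‖!![1, v; 0, 1]‖ ≤ 2 + R := (norm_shear_le v).trans (by simpa using hR v hv)
  have hfree := hC ε hε hεε₀
  rw [opR_eq_norm, TmatR_eq_mul, ← mul_sub]
  calc _ ≤ ‖!![1, v; 0, 1]‖ * ‖_‖ := norm_mul_le _ _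
    _ ≤ (2 + R) * (C * ε ^ 2) :=
      mul_le_mul hshear hfree (norm_nonneg _) ((norm_nonneg _).trans hshear)
    _ = (2 + R) * C * ε ^ 2 := by ring
end
end

section
/- Let (v_j)_{j≥1} be real numbers contained in a compact set K ⊂ ℝ, let v̄ > 0 be a fixed real, let l ≥ 1 be an even integer with E_l = (πl)², and let (θ_n)_{n≥0} be the modified Prüfer phases. Then there exist ε₀ > 0 and a constant C (depending only on K, v̄, l) such that for all 0 < ε ≤ ε₀ and all integers 0 ≤ m ≤ n: |log‖M^ε·T^{E_l−ε}(n,m)·(M^ε)^{−1}·e_{θ_m}‖ − ε^{1/2}·Σ_{j=m+1}^{n} X_j| ≤ C·(n−m)·ε, where X_j = −((v_j − v̄)/(2·(2v̄E_l)^{1/2}))·cos(2θ_{j−1}). -/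
open Matrix Real Filter MeasureTheory ProbabilityTheory

noncomputable section

/-!
Conjugation by `M^ε` brings the one-step transfer matrix at energy `E_l - ε` into the form
`1 + √ε N + O(ε)` with `N = [[x, y], [-y, -x]]`, `x = (v̄ - v) / (4b²)`, `y = (v̄ + v) / (4b²)`
(note `4b² = 2 (2 v̄ E_l)^{1/2}`), uniformly for `v` in a bounded set. This is where `l` even
enters: with `a = √(E_l - ε)` one has `cos a = 1 + O(ε²)` and `sin a = -ε / (2πl) + O(ε²)`, the
latter needed to order `ε²` because `(M^ε)⁻¹` contributes a factor `1/√ε`. For such a matrix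
`‖B e_θ‖² = 1 + 2√ε x cos 2θ + O(ε)`, so `log ‖B e_θ‖ = √ε x cos 2θ + O(ε)`. Finally `S_B`
sends `θ` to the direction of `B e_θ`, so `M T(n,m) M⁻¹ e_{θ_m}` is `e_{θ_n}` times the product
of the one-step norms along the Prüfer phases, and its logarithm is a sum of `n - m` one-step
terms, each within `O(ε)` of `√ε X_j`.
-/

open Finset

lemma vnormR_eq_sqrt (x : Fin 2 → ℝ) : vnormR x = √(x 0 ^ 2 + x 1 ^ 2) := by
  simp [vnormR, EuclideanSpace.norm_eq, Fin.sum_univ_two, sq_abs]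

lemma vnormR_sq (x : Fin 2 → ℝ) : vnormR x ^ 2 = x 0 ^ 2 + x 1 ^ 2 := by
  rw [vnormR_eq_sqrt, sq_sqrt (by positivity)]

lemma vnormR_smul (r : ℝ) (x : Fin 2 → ℝ) : vnormR (r • x) = |r| * vnormR x := by
  rw [vnormR, vnormR, WithLp.equiv_symm_apply, WithLp.toLp_smul, norm_smul,
    Real.norm_eq_abs]

lemma vnormR_pos {x : Fin 2 → ℝ} (hx : x ≠ 0) : 0 < vnormR x := by
  simpa [vnormR] using hx

lemma vnormR_eth (θ : ℝ) : vnormR (eth θ) = 1 := by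
  simp [vnormR_eq_sqrt, eth]

lemma eth_ne_zero (θ : ℝ) : eth θ ≠ 0 := fun h => by
  simpa [h, vnormR] using vnormR_eth θ

lemma cos_SMap (A : Matrix (Fin 2) (Fin 2) ℝ) (θ : ℝ) :
    cos (SMap A θ) = cos (Complex.arg ⟨(A *ᵥ eth θ) 0, (A *ᵥ eth θ) 1⟩) := by
  rw [SMap, toIcoMod, zsmul_eq_mul, cos_sub_int_mul_two_pi]

lemma sin_SMap (A : Matrix (Fin 2) (Fin 2) ℝ) (θ : ℝ) :
    sin (SMap A θ) = sin (Complex.arg ⟨(A *ᵥ eth θ) 0, (A *ᵥ eth θ) 1⟩) := by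
  rw [SMap, toIcoMod, zsmul_eq_mul, sin_sub_int_mul_two_pi]

lemma mulVec_eth_eq_smul_eth_SMap (A : Matrix (Fin 2) (Fin 2) ℝ) (θ : ℝ) :
    A *ᵥ eth θ = vnormR (A *ᵥ eth θ) • eth (SMap A θ) := by
  set u := A *ᵥ eth θ
  have hnorm : ‖(⟨u 0, u 1⟩ : ℂ)‖ = vnormR u := by
    rw [Complex.norm_def, Complex.normSq_apply, vnormR_eq_sqrt, sq, sq]
  ext i
  fin_cases i
  · show u 0 = vnormR u * cos (SMap A θ)
    rw [cos_SMap, ← hnorm]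
    exact (Complex.norm_mul_cos_arg ⟨u 0, u 1⟩).symm
  · show u 1 = vnormR u * sin (SMap A θ)
    rw [sin_SMap, ← hnorm]
    exact (Complex.norm_mul_sin_arg ⟨u 0, u 1⟩).symm

section Telescoping

variable {P B : ℕ → Matrix (Fin 2) (Fin 2) ℝ} {θ : ℕ → ℝ} {m : ℕ}

lemma mulVec_eth_eq_prod_smul_eth (hθ : ∀ j, θ (j + 1) = SMap (B (j + 1)) (θ j))
    (hPm : P m = 1) (hP : ∀ n, m ≤ n → P (n + 1) = B (n + 1) * P n) {n : ℕ} (hmn : m ≤ n) :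
    P n *ᵥ eth (θ m) = (∏ j ∈ Icc (m + 1) n, vnormR (B j *ᵥ eth (θ (j - 1)))) • eth (θ n) := by
  induction n, hmn using Nat.le_induction with
  | base => simp [hPm]
  | succ n hmn ih =>
    rw [hP n hmn, ← mulVec_mulVec, ih, mulVec_smul, mulVec_eth_eq_smul_eth_SMap, ← hθ, smul_smul,
      prod_Icc_succ_top (by omega), Nat.add_sub_cancel]

lemma log_vnormR_mulVec_eth_eq_sum (hθ : ∀ j, θ (j + 1) = SMap (B (j + 1)) (θ j))
    (hPm : P m = 1) (hP : ∀ n, m ≤ n → P (n + 1) = B (n + 1) * P n) (hB : ∀ j, (B j).det ≠ 0)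
    {n : ℕ} (hmn : m ≤ n) :
    log (vnormR (P n *ᵥ eth (θ m)))
      = ∑ j ∈ Icc (m + 1) n, log (vnormR (B j *ᵥ eth (θ (j - 1)))) := by
  rw [mulVec_eth_eq_prod_smul_eth hθ hPm hP hmn, vnormR_smul, vnormR_eth, mul_one,
    log_abs, log_prod]
  exact fun j _ => (vnormR_pos fun h => eth_ne_zero _ (eq_zero_of_mulVec_eq_zero (hB j) h)).ne'

end Telescoping

lemma TprodR_self (v : ℕ → ℝ) (E : ℝ) (m : ℕ) : TprodR v E m m = 1 := by
  simp [TprodR]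

lemma TprodR_succ (v : ℕ → ℝ) (E : ℝ) {m n : ℕ} (hmn : m ≤ n) :
    TprodR v E (n + 1) m = TmatR (v (n + 1)) E * TprodR v E n m := by
  rw [TprodR, TprodR, Nat.succ_sub hmn, List.range_succ_eq_map, List.map_cons, List.prod_cons,
    List.map_map]
  simp [Function.comp_def]

lemma det_TmatR (v E : ℝ) : (TmatR v E).det = 1 := by
  rw [TmatR, det_mul, det_fin_two_of, det_fin_two_of]
  rcases eq_or_ne √E 0 with h | h
  · simp [h]
  · field_simp
    linear_combination cos_sq_add_sin_sq √E

/-- Writing a real `2 × 2` matrix as `α + ν J + μ σ_z + β σ_x` (`J` the rotation by `π/2`)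
separates the `θ`-independent part of `‖A e_θ‖²` from the part oscillating in `2θ`. -/
lemma vnormR_sq_mulVec_eth (α β μ ν θ : ℝ) :
    vnormR (!![α + μ, β + ν; β - ν, α - μ] *ᵥ eth θ) ^ 2
      = α ^ 2 + β ^ 2 + μ ^ 2 + ν ^ 2 + 2 * (α * μ - β * ν) * cos (2 * θ)
        + 2 * (α * β + μ * ν) * sin (2 * θ) := by
  rw [vnormR_sq, cos_two_mul', sin_two_mul]
  simp only [mulVec, dotProduct, Fin.sum_univ_two, eth, of_apply, cons_val', cons_val_zero,
    cons_val_one, cons_val_fin_one]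
  linear_combination (α ^ 2 + β ^ 2 + μ ^ 2 + ν ^ 2) * cos_sq_add_sin_sq θ

lemma abs_vnormR_sq_mulVec_eth_sub_le {α β μ ν x y δ : ℝ} (hδ : δ ≤ 1) (hα : |α - 1| ≤ δ)
    (hβ : |β| ≤ δ) (hμ : |μ - x| ≤ δ) (hν : |ν - y| ≤ δ) (θ : ℝ) :
    |vnormR (!![α + μ, β + ν; β - ν, α - μ] *ᵥ eth θ) ^ 2 - (1 + 2 * x * cos (2 * θ))|
      ≤ 24 * δ + 6 * (x ^ 2 + y ^ 2) := by
  have hδ0 : 0 ≤ δ := (abs_nonneg β).trans hβ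
  obtain ⟨hα₁, hα₂⟩ := abs_le.mp hα
  obtain ⟨hμ₁, hμ₂⟩ := abs_le.mp hμ
  obtain ⟨hν₁, hν₂⟩ := abs_le.mp hν
  have hα2 : |α ^ 2 - 1| ≤ 3 * δ := by
    rw [abs_le]; constructor <;> nlinarith
  have hβ2 : β ^ 2 ≤ δ := by nlinarith [sq_abs β, abs_nonneg β]
  have hμ2 : μ ^ 2 ≤ 2 * x ^ 2 + 2 * δ := by nlinarith [sq_nonneg (μ - 2 * x)]
  have hν2 : ν ^ 2 ≤ 2 * y ^ 2 + 2 * δ := by nlinarith [sq_nonneg (ν - 2 * y)]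
  have hcos : |α * μ - β * ν - x| ≤ 2 * δ + (μ ^ 2 + ν ^ 2) / 2 :=
    calc |α * μ - β * ν - x| = |(α - 1) * μ + (μ - x) - β * ν| := by ring_nf
      _ ≤ |(α - 1) * μ| + |μ - x| + |β * ν| :=
          (abs_sub _ _).trans (add_le_add_left (abs_add_le _ _) _)
      _ ≤ δ * |μ| + δ + δ * |ν| := by rw [abs_mul, abs_mul]; gcongr
      _ ≤ 2 * δ + (μ ^ 2 + ν ^ 2) / 2 := by
          nlinarith [sq_abs μ, sq_abs ν, sq_nonneg (|μ| - δ), sq_nonneg (|ν| - δ)]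
  have hsin : |α * β + μ * ν| ≤ 2 * δ + (μ ^ 2 + ν ^ 2) / 2 :=
    calc |α * β + μ * ν| ≤ |α| * |β| + |μ| * |ν| := by
          rw [← abs_mul, ← abs_mul]; exact abs_add_le _ _
      _ ≤ 2 * δ + (μ ^ 2 + ν ^ 2) / 2 := by
          have : |α| ≤ 2 := abs_le.mpr ⟨by linarith, by linarith⟩
          nlinarith [sq_abs μ, sq_abs ν, sq_nonneg (|μ| - |ν|), abs_nonneg α, abs_nonneg β]
  obtain ⟨hα2₁, hα2₂⟩ := abs_le.mp hα2
  obtain ⟨hc₁, hc₂⟩ := abs_le.mp <| (abs_mul _ _).trans_le <|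
    (mul_le_of_le_one_right (abs_nonneg _) (abs_cos_le_one (2 * θ))).trans hcos
  obtain ⟨hs₁, hs₂⟩ := abs_le.mp <| (abs_mul _ _).trans_le <|
    (mul_le_of_le_one_right (abs_nonneg _) (abs_sin_le_one (2 * θ))).trans hsin
  rw [vnormR_sq_mulVec_eth, abs_le]
  constructor <;> linarith [sq_nonneg β, sq_nonneg μ, sq_nonneg ν, sq_nonneg x, sq_nonneg y]

lemma abs_log_sub_sub_one_le {s : ℝ} (hs : 1 / 2 ≤ s) : |log s - (s - 1)| ≤ 2 * (s - 1) ^ 2 := by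
  have hs0 : 0 < s := by linarith
  have hlow := one_sub_inv_le_log_of_pos hs0
  have hupp := log_le_sub_one_of_pos hs0
  have hgap : s - 1 - (1 - s⁻¹) = (s - 1) ^ 2 / s := by field_simp
  rw [abs_sub_comm, abs_of_nonneg (by linarith)]
  calc s - 1 - log s ≤ (s - 1) ^ 2 / s := by linarith
    _ ≤ 2 * (s - 1) ^ 2 := by rw [div_le_iff₀ hs0]; nlinarith [sq_nonneg (s - 1)]

lemma abs_log_sub_le {s t r : ℝ} (hs : |s - (1 + t)| ≤ r) (hsmall : |t| + r ≤ 1 / 2) :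
    |log s - t| ≤ r + 2 * (|t| + r) ^ 2 := by
  have hs1 : |s - 1| ≤ |t| + r := by
    calc |s - 1| = |(s - (1 + t)) + t| := by ring_nf
      _ ≤ r + |t| := (abs_add_le _ _).trans (by linarith)
      _ = |t| + r := add_comm _ _
  have hlog := abs_log_sub_sub_one_le (s := s) (by linarith [(abs_le.mp hs1).1])
  calc |log s - t| = |(log s - (s - 1)) + (s - (1 + t))| := by ring_nf
    _ ≤ 2 * (s - 1) ^ 2 + r := (abs_add_le _ _).trans (add_le_add hlog hs)
    _ ≤ r + 2 * (|t| + r) ^ 2 := by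
      nlinarith [sq_abs (s - 1), abs_nonneg (s - 1)]

lemma abs_log_sub_le_mul_sq {s t e A R : ℝ} (he : 0 ≤ e) (he1 : e ≤ 1)
    (hR : 0 ≤ R) (ht : |t| ≤ A * e) (hs : |s - (1 + t)| ≤ R * e ^ 2)
    (hsmall : (A + R) ^ 2 * e ^ 2 ≤ 1 / 4) :
    |log s - t| ≤ (R + 2 * (A + R) ^ 2) * e ^ 2 := by
  have hsum : |t| + R * e ^ 2 ≤ (A + R) * e := by
    nlinarith [mul_le_mul_of_nonneg_left (show e ^ 2 ≤ e by nlinarith) hR]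
  have hsum' : (A + R) * e ≤ 1 / 2 := by nlinarith [abs_nonneg t]
  calc |log s - t| ≤ R * e ^ 2 + 2 * (|t| + R * e ^ 2) ^ 2 :=
        abs_log_sub_le hs (hsum.trans hsum')
    _ ≤ R * e ^ 2 + 2 * ((A + R) * e) ^ 2 := by
        gcongr
    _ = (R + 2 * (A + R) ^ 2) * e ^ 2 := by ring

lemma exists_abs_log_vnormR_mulVec_eth_sub_le (C L : ℝ) :
    ∃ ε₀ > (0 : ℝ), ∃ K : ℝ, ∀ ε, 0 < ε → ε ≤ ε₀ → ∀ α β μ ν X Y : ℝ, |X| ≤ L → |Y| ≤ L →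
      |α - 1| ≤ C * ε → |β| ≤ C * ε → |μ - √ε * X| ≤ C * ε → |ν - √ε * Y| ≤ C * ε → ∀ θ,
      |log (vnormR (!![α + μ, β + ν; β - ν, α - μ] *ᵥ eth θ)) - √ε * X * cos (2 * θ)|
        ≤ K * ε := by
  set A := 2 * |L|
  set R := 24 * |C| + 12 * L ^ 2
  refine ⟨min (1 / (|C| + 1)) (1 / (4 * (A + R) ^ 2 + 1)), by positivity,
    (R + 2 * (A + R) ^ 2) / 2, fun ε hε hε₀ α β μ ν X Y hX hY hα hβ hμ hν θ => ?_⟩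
  have hεC : ε * (|C| + 1) ≤ 1 := (le_div_iff₀ (by positivity)).mp (hε₀.trans (min_le_left _ _))
  have hεAR : ε * (4 * (A + R) ^ 2 + 1) ≤ 1 :=
    (le_div_iff₀ (by positivity)).mp (hε₀.trans (min_le_right _ _))
  have hδ : C * ε ≤ 1 := by nlinarith [le_abs_self C]
  set e := √ε
  have he : 0 < e := sqrt_pos.mpr hε
  have he2 : e ^ 2 = ε := sq_sqrt hε.le
  have he1 : e ≤ 1 := sqrt_le_one.mpr (by nlinarith [abs_nonneg C])
  set u := !![α + μ, β + ν; β - ν, α - μ] *ᵥ eth θ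
  have hs : |vnormR u ^ 2 - (1 + 2 * (e * X) * cos (2 * θ))| ≤ R * e ^ 2 := by
    refine (abs_vnormR_sq_mulVec_eth_sub_le hδ hα hβ hμ hν θ).trans ?_
    have hX2 : X ^ 2 ≤ L ^ 2 := sq_le_sq' (abs_le.mp hX).1 (abs_le.mp hX).2
    have hY2 : Y ^ 2 ≤ L ^ 2 := sq_le_sq' (abs_le.mp hY).1 (abs_le.mp hY).2
    rw [mul_pow, mul_pow, he2]
    nlinarith [le_abs_self C]
  have ht : |2 * (e * X) * cos (2 * θ)| ≤ A * e := by
    rw [abs_mul, abs_mul, abs_mul, abs_two, abs_of_pos he]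
    calc 2 * (e * |X|) * |cos (2 * θ)| ≤ 2 * (e * |L|) * 1 :=
          mul_le_mul (by nlinarith [le_abs_self L]) (abs_cos_le_one _) (abs_nonneg _)
            (by positivity)
      _ = A * e := by ring
  have hlog := abs_log_sub_le_mul_sq he.le he1 (by positivity) ht hs (by nlinarith)
  have hhalf : log (vnormR u) - e * X * cos (2 * θ)
      = (log (vnormR u ^ 2) - 2 * (e * X) * cos (2 * θ)) / 2 := by
    rw [log_pow]; ring
  rw [hhalf, abs_div, abs_two]
  calc _ ≤ (R + 2 * (A + R) ^ 2) * e ^ 2 / 2 := by gcongr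
    _ = _ := by rw [he2]; ring

section NearPeriod

variable {p ε : ℝ}

lemma cos_eq_cos_sub (hsin : sin p = 0) (hcos : cos p = 1) (x : ℝ) : cos x = cos (p - x) := by
  rw [cos_sub, hsin, hcos]; ring

lemma sin_eq_neg_sin_sub (hsin : sin p = 0) (hcos : cos p = 1) (x : ℝ) : sin x = -sin (p - x) := by
  rw [sin_sub, hsin, hcos]; ring

lemma sub_sqrt_sq_sub_mem_Icc (hp : 2 ≤ p) (hε : 0 ≤ ε) (hε1 : ε ≤ 1) :
    p - √(p ^ 2 - ε) ∈ Set.Icc 0 (ε / 2) := by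
  have ha0 : 0 ≤ √(p ^ 2 - ε) := sqrt_nonneg _
  have ha2 : √(p ^ 2 - ε) ^ 2 = p ^ 2 - ε := sq_sqrt (by nlinarith)
  have hap : √(p ^ 2 - ε) ≤ p := by
    rw [sqrt_le_left (by linarith)]; linarith
  constructor <;> nlinarith

lemma abs_cos_sqrt_sq_sub_sub_one_le (hp : 2 ≤ p) (hsin : sin p = 0) (hcos : cos p = 1)
    (hε : 0 ≤ ε) (hε1 : ε ≤ 1) : |cos √(p ^ 2 - ε) - 1| ≤ ε ^ 2 := by
  obtain ⟨hd0, hd⟩ := sub_sqrt_sq_sub_mem_Icc hp hε hε1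
  set d := p - √(p ^ 2 - ε)
  rw [cos_eq_cos_sub hsin hcos, abs_sub_comm, abs_of_nonneg (by linarith [cos_le_one d])]
  nlinarith [one_sub_sq_div_two_le_cos (x := d)]

lemma abs_sin_sqrt_sq_sub_le (hp : 2 ≤ p) (hsin : sin p = 0) (hcos : cos p = 1)
    (hε : 0 ≤ ε) (hε1 : ε ≤ 1) : |sin √(p ^ 2 - ε)| ≤ ε := by
  obtain ⟨hd0, hd⟩ := sub_sqrt_sq_sub_mem_Icc hp hε hε1
  rw [sin_eq_neg_sin_sub hsin hcos, abs_neg]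
  exact abs_sin_le_abs.trans (by rw [abs_of_nonneg hd0]; linarith)

lemma abs_mul_cos_sqrt_sq_sub_sub_one_sub_le (hp : 2 ≤ p) (hsin : sin p = 0) (hcos : cos p = 1)
    (hε : 0 ≤ ε) (hε1 : ε ≤ 1) (v : ℝ) :
    |v * (cos √(p ^ 2 - ε) - 1) - √(p ^ 2 - ε) * sin √(p ^ 2 - ε)| ≤ (|v| + p) * ε := by
  have hc := abs_cos_sqrt_sq_sub_sub_one_le hp hsin hcos hε hε1
  have hs := abs_sin_sqrt_sq_sub_le hp hsin hcos hε hε1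
  have hap : √(p ^ 2 - ε) ≤ p := by linarith [(sub_sqrt_sq_sub_mem_Icc hp hε hε1).1]
  calc _ ≤ |v| * |cos √(p ^ 2 - ε) - 1| + √(p ^ 2 - ε) * |sin √(p ^ 2 - ε)| :=
        (abs_sub _ _).trans_eq (by rw [abs_mul, abs_mul, abs_of_nonneg (sqrt_nonneg _)])
    _ ≤ |v| * ε + p * ε := by
        gcongr
        exact hc.trans (by nlinarith)
    _ = (|v| + p) * ε := by ring

lemma abs_sin_sqrt_sq_sub_add_le (hp : 2 ≤ p) (hsin : sin p = 0) (hcos : cos p = 1)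
    (hε : 0 ≤ ε) (hε1 : ε ≤ 1) :
    |sin √(p ^ 2 - ε) + ε * √(p ^ 2 - ε) / (2 * p ^ 2)| ≤ ε ^ 2 := by
  obtain ⟨hd0, hd⟩ := sub_sqrt_sq_sub_mem_Icc hp hε hε1
  set d := p - √(p ^ 2 - ε) with hd_def
  have ha : √(p ^ 2 - ε) = p - d := by rw [hd_def]; ring
  have hεd : ε = d * (2 * p - d) := by
    have := sq_sqrt (show 0 ≤ p ^ 2 - ε by nlinarith)
    rw [ha] at this; linarith
  -- the first-order terms `-d` and `d` cancel
  have hsplit : sin √(p ^ 2 - ε) + ε * √(p ^ 2 - ε) / (2 * p ^ 2)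
      = (d - sin d) - d ^ 2 * (3 * p - d) / (2 * p ^ 2) := by
    rw [sin_eq_neg_sin_sub hsin hcos, ← hd_def, ha, hεd]
    field_simp
    ring
  have hsin_d : |d - sin d| ≤ d ^ 2 := by
    refine (abs_sub_sin_le d).trans ?_
    rw [abs_of_nonneg hd0]
    nlinarith [pow_nonneg hd0 2]
  have hquad : |d ^ 2 * (3 * p - d) / (2 * p ^ 2)| ≤ d ^ 2 := by
    rw [abs_of_nonneg (by apply div_nonneg <;> nlinarith), div_le_iff₀ (by positivity)]
    nlinarith [pow_nonneg hd0 2, mul_nonneg (pow_nonneg hd0 2) (by linarith : (0:ℝ) ≤ p - 2)]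
  rw [hsplit]
  calc _ ≤ |d - sin d| + |d ^ 2 * (3 * p - d) / (2 * p ^ 2)| := abs_sub _ _
    _ ≤ ε ^ 2 := by nlinarith

lemma abs_sin_sqrt_sq_sub_div_add_le (hp : 2 ≤ p) (hsin : sin p = 0) (hcos : cos p = 1)
    (hε : 0 < ε) (hε1 : ε ≤ 1) :
    |sin √(p ^ 2 - ε) / (√(p ^ 2 - ε) * √ε) + √ε / (2 * p ^ 2)| ≤ ε := by
  have h := abs_sin_sqrt_sq_sub_add_le hp hsin hcos hε.le hε1
  have ha : 1 ≤ √(p ^ 2 - ε) := by linarith [(sub_sqrt_sq_sub_mem_Icc hp hε.le hε1).2]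
  set a := √(p ^ 2 - ε)
  set e := √ε
  have he : 0 < e := sqrt_pos.mpr hε
  have he1 : e ≤ 1 := sqrt_le_one.mpr hε1
  have he2 : e ^ 2 = ε := sq_sqrt hε.le
  have hid : sin a / (a * e) + e / (2 * p ^ 2) = (sin a + ε * a / (2 * p ^ 2)) / (a * e) := by
    rw [← he2]; field_simp
  have hae : 0 < a * e := by nlinarith
  rw [hid, abs_div, abs_of_pos hae, div_le_iff₀ hae]
  refine h.trans ?_
  rw [← he2]
  nlinarith [mul_le_mul_of_nonneg_left (he1.trans ha) (by positivity : 0 ≤ e ^ 3)]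

end NearPeriod

lemma conj_TmatR_formula {a b e : ℝ} (ha : a ≠ 0) (hb : b ≠ 0) (he : e ≠ 0) (c s v : ℝ) :
    !![e / (2 * b), -b; e / (2 * b), b] * (!![1, v; 0, 1] * !![c, -a * s; s / a, c]) *
        !![b / e, b / e; -1 / (2 * b), 1 / (2 * b)]
      = let α := c + v * s / (2 * a)
        let β := v * s / (2 * a)
        let γ := -(b ^ 2 * s) / (a * e)
        let δ := e * (v * c - a * s) / (4 * b ^ 2)
        !![α + (γ - δ), β + (γ + δ); β - (γ + δ), α - (γ - δ)] := by
  simp only [mul_fin_two]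
  ext i j
  fin_cases i <;> fin_cases j <;>
    simp only [Fin.zero_eta, Fin.mk_one, of_apply, cons_val', cons_val_zero, cons_val_one,
      cons_val_fin_one] <;> field_simp <;> ring

lemma El_pos {l : ℕ} (hl : l ≠ 0) : 0 < El l := by
  rw [El]; positivity

lemma two_le_pi_mul {l : ℕ} (hl : 1 ≤ l) : 2 ≤ π * l := by
  have : (1 : ℝ) ≤ l := by exact_mod_cast hl
  nlinarith [pi_gt_three]

lemma cos_pi_mul_of_even {l : ℕ} (hl : Even l) : cos (π * l) = 1 := by
  obtain ⟨k, rfl⟩ := hl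
  rw [show π * ((k + k : ℕ) : ℝ) = k * (2 * π) by push_cast; ring]
  exact cos_nat_mul_two_pi k

/-- The constant `b` of the paper. -/
def bScale (vb : ℝ) (l : ℕ) : ℝ := (vb * El l / 2) ^ ((1 : ℝ) / 4)

section Basis

variable {vb : ℝ} {l : ℕ}

lemma bScale_pos (h : 0 < vb * El l) : 0 < bScale vb l :=
  rpow_pos_of_pos (by positivity) _

lemma bScale_pow_four (h : 0 ≤ vb * El l) : bScale vb l ^ 4 = vb * El l / 2 := by
  rw [bScale, ← rpow_natCast, ← rpow_mul (by positivity)]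
  norm_num

lemma two_mul_sqrt_eq_four_mul_bScale_sq (h : 0 ≤ vb * El l) :
    2 * √(2 * vb * El l) = 4 * bScale vb l ^ 2 := by
  have hb : bScale vb l ^ 2 = √(vb * El l / 2) := by
    rw [eq_comm, sqrt_eq_iff_mul_self_eq (by positivity) (by positivity), ← pow_add,
      bScale_pow_four h]
  rw [hb, show 2 * vb * El l = 2 ^ 2 * (vb * El l / 2) by ring, sqrt_mul (by positivity),
    sqrt_sq (by norm_num)]
  ring

lemma Meps_eq (ε : ℝ) :
    Meps vb l ε
      = !![√ε / (2 * bScale vb l), -bScale vb l; √ε / (2 * bScale vb l), bScale vb l] := by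
  rw [Meps, mul_fin_two, bScale]
  simp only [mul_zero, add_zero, mul_one, zero_add, one_div_mul_eq_div]

lemma Meps_inv {ε : ℝ} (hb : bScale vb l ≠ 0) (hε : 0 < ε) :
    (Meps vb l ε)⁻¹
      = !![bScale vb l / √ε, bScale vb l / √ε; -1 / (2 * bScale vb l), 1 / (2 * bScale vb l)] := by
  have he : √ε ≠ 0 := (sqrt_pos.mpr hε).ne'
  refine inv_eq_right_inv ?_
  rw [Meps_eq, mul_fin_two]
  ext i j
  fin_cases i <;> fin_cases j <;> field_simp <;> norm_num

lemma isUnit_det_Meps {ε : ℝ} (hb : bScale vb l ≠ 0) (hε : 0 < ε) : IsUnit (Meps vb l ε).det := by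
  have he : √ε ≠ 0 := (sqrt_pos.mpr hε).ne'
  have hdet : (Meps vb l ε).det = √ε := by
    rw [Meps_eq, det_fin_two_of]
    field_simp
    ring
  exact hdet ▸ isUnit_iff_ne_zero.mpr he

end Basis

lemma log_vnormR_conj_TprodR_eq_sum {vb ε : ℝ} {l : ℕ} (hM : IsUnit (Meps vb l ε).det)
    (v : ℕ → ℝ) (θ₀ : ℝ) {m n : ℕ} (hmn : m ≤ n) :
    log (vnormR ((Meps vb l ε * TprodR v (El l - ε) n m * (Meps vb l ε)⁻¹) *ᵥ
        eth (pruefer vb l ε v θ₀ m)))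
      = ∑ j ∈ Icc (m + 1) n, log (vnormR ((Meps vb l ε * TmatR (v j) (El l - ε) *
          (Meps vb l ε)⁻¹) *ᵥ eth (pruefer vb l ε v θ₀ (j - 1)))) := by
  refine log_vnormR_mulVec_eth_eq_sum
    (P := fun n => Meps vb l ε * TprodR v (El l - ε) n m * (Meps vb l ε)⁻¹)
    (B := fun j => Meps vb l ε * TmatR (v j) (El l - ε) * (Meps vb l ε)⁻¹)
    (fun j => by rw [pruefer]) ?_ (fun n hmn => ?_) (fun j => ?_) hmn
  · rw [TprodR_self, Matrix.mul_one, mul_nonsing_inv _ hM]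
  · rw [TprodR_succ _ _ hmn]
    simp only [Matrix.mul_assoc, nonsing_inv_mul_cancel_left _ _ hM]
  · rw [det_conj ((isUnit_iff_isUnit_det _).mpr hM), det_TmatR]
    exact one_ne_zero

lemma abs_conj_TmatR_coeffs_sub_le {p b vb ε : ℝ} (hp : 2 ≤ p) (hsin : sin p = 0)
    (hcos : cos p = 1) (hb : 0 < b) (hb4 : b ^ 4 = vb * p ^ 2 / 2) (hε : 0 < ε) (hε1 : ε ≤ 1)
    (v : ℝ) :
    let a := √(p ^ 2 - ε)
    let γ := -(b ^ 2 * sin a) / (a * √ε)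
    let δ := √ε * (v * cos a - a * sin a) / (4 * b ^ 2)
    |γ - δ - √ε * ((vb - v) / (4 * b ^ 2))| ≤ (b ^ 2 + (|v| + p) / (4 * b ^ 2)) * ε ∧
      |γ + δ - √ε * ((vb + v) / (4 * b ^ 2))| ≤ (b ^ 2 + (|v| + p) / (4 * b ^ 2)) * ε := by
  intro a γ δ
  have hsa := abs_sin_sqrt_sq_sub_div_add_le hp hsin hcos hε hε1
  have hvcs := abs_mul_cos_sqrt_sq_sub_sub_one_sub_le hp hsin hcos hε.le hε1 v
  have he1 : √ε ≤ 1 := sqrt_le_one.mpr hε1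
  have hvb : vb / (4 * b ^ 2) = b ^ 2 / (2 * p ^ 2) := by field_simp; linarith
  have hγ : |γ - √ε * (vb / (4 * b ^ 2))| ≤ b ^ 2 * ε := by
    rw [hvb, show γ - √ε * (b ^ 2 / (2 * p ^ 2))
      = -b ^ 2 * (sin a / (a * √ε) + √ε / (2 * p ^ 2)) by ring, abs_mul, abs_neg, abs_sq]
    gcongr
  have hδ : |δ - √ε * (v / (4 * b ^ 2))| ≤ (|v| + p) / (4 * b ^ 2) * ε := by
    calc _ = |√ε / (4 * b ^ 2) * (v * (cos a - 1) - a * sin a)| := by simp only [δ]; ring_nf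
      _ = √ε / (4 * b ^ 2) * |v * (cos a - 1) - a * sin a| := by
          rw [abs_mul, abs_of_nonneg (by positivity)]
      _ ≤ 1 / (4 * b ^ 2) * ((|v| + p) * ε) := by gcongr
      _ = (|v| + p) / (4 * b ^ 2) * ε := by ring
  constructor
  · calc _ = |(γ - √ε * (vb / (4 * b ^ 2))) - (δ - √ε * (v / (4 * b ^ 2)))| := by ring_nf
      _ ≤ _ := (abs_sub _ _).trans (by linarith)
  · calc _ = |(γ - √ε * (vb / (4 * b ^ 2))) + (δ - √ε * (v / (4 * b ^ 2)))| := by ring_nf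
      _ ≤ _ := (abs_add_le _ _).trans (by linarith)

lemma Meps_conj_TmatR_approx {vb : ℝ} {l : ℕ} (hvb : 0 < vb) (hl : 1 ≤ l) (hleven : Even l)
    (V : ℝ) :
    ∃ C, ∀ v, |v| ≤ V → ∀ ε, 0 < ε → ε ≤ 1 → ∃ α β μ ν : ℝ,
      Meps vb l ε * TmatR v (El l - ε) * (Meps vb l ε)⁻¹ = !![α + μ, β + ν; β - ν, α - μ] ∧
      |α - 1| ≤ C * ε ∧ |β| ≤ C * ε ∧
      |μ - √ε * ((vb - v) / (4 * bScale vb l ^ 2))| ≤ C * ε ∧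
      |ν - √ε * ((vb + v) / (4 * bScale vb l ^ 2))| ≤ C * ε := by
  have hvbEl : 0 < vb * El l := mul_pos hvb (El_pos (by omega))
  have hb := bScale_pos hvbEl
  obtain ⟨p, hp_def⟩ : ∃ p, p = π * l := ⟨_, rfl⟩
  have hp : 2 ≤ p := hp_def ▸ two_le_pi_mul hl
  have hsin : sin p = 0 := by rw [hp_def, mul_comm]; exact sin_nat_mul_pi l
  have hcos : cos p = 1 := hp_def ▸ cos_pi_mul_of_even hleven
  have hEl : El l = p ^ 2 := by rw [El, hp_def]
  have hb4 : bScale vb l ^ 4 = vb * p ^ 2 / 2 := hEl ▸ bScale_pow_four hvbEl.le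
  refine ⟨1 + V + bScale vb l ^ 2 + (V + p) / (4 * bScale vb l ^ 2), fun v hv ε hε hε1 => ?_⟩
  obtain ⟨hμ, hν⟩ := abs_conj_TmatR_coeffs_sub_le hp hsin hcos hb hb4 hε hε1 v
  rw [Meps_inv hb.ne' hε, Meps_eq, TmatR, hEl]
  have ha : 1 ≤ √(p ^ 2 - ε) := by linarith [(sub_sqrt_sq_sub_mem_Icc hp hε.le hε1).2]
  have hc := abs_cos_sqrt_sq_sub_sub_one_le hp hsin hcos hε.le hε1
  have hs := abs_sin_sqrt_sq_sub_le hp hsin hcos hε.le hε1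
  have hV : 0 ≤ V := (abs_nonneg v).trans hv
  set b := bScale vb l
  set a := √(p ^ 2 - ε)
  have hβ : |v * sin a / (2 * a)| ≤ V * ε := by
    rw [abs_div, abs_mul, abs_of_pos (by positivity : 0 < 2 * a), div_le_iff₀ (by positivity)]
    nlinarith [mul_le_mul hv hs (abs_nonneg _) hV, mul_nonneg hV hε.le]
  have hvp : (|v| + p) / (4 * b ^ 2) * ε ≤ (V + p) / (4 * b ^ 2) * ε := by gcongr
  have hbε : 0 ≤ b ^ 2 * ε := by positivity
  have hpε : 0 ≤ (V + p) / (4 * b ^ 2) * ε := by positivity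
  refine ⟨_, _, _, _, conj_TmatR_formula (by positivity) hb.ne' (sqrt_pos.mpr hε).ne' _ _ v,
    ?_, by nlinarith, hμ.trans (by nlinarith), hν.trans (by nlinarith)⟩
  calc _ = |(cos a - 1) + v * sin a / (2 * a)| := by ring_nf
    _ ≤ |cos a - 1| + |v * sin a / (2 * a)| := abs_add_le _ _
    _ ≤ _ := by nlinarith

lemma abs_log_vnormR_conj_TmatR_sub_le {vb : ℝ} {l : ℕ} (hvb : 0 < vb) (hl : 1 ≤ l)
    (hleven : Even l) (V : ℝ) :
    ∃ ε₀ > (0 : ℝ), ∃ C : ℝ, ∀ v, |v| ≤ V → ∀ ε, 0 < ε → ε ≤ ε₀ → ∀ θ,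
      |log (vnormR ((Meps vb l ε * TmatR v (El l - ε) * (Meps vb l ε)⁻¹) *ᵥ eth θ))
        - √ε * (-((v - vb) / (2 * √(2 * vb * El l)) * cos (2 * θ)))| ≤ C * ε := by
  have hvbEl : 0 < vb * El l := mul_pos hvb (El_pos (by omega))
  have h4b : 0 < 4 * bScale vb l ^ 2 := by have := bScale_pos hvbEl; positivity
  obtain ⟨C₁, hC₁⟩ := Meps_conj_TmatR_approx hvb hl hleven V
  obtain ⟨ε₀, hε₀, C, hC⟩ := exists_abs_log_vnormR_mulVec_eth_sub_le C₁
    ((vb + |V|) / (4 * bScale vb l ^ 2))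
  refine ⟨min ε₀ 1, by positivity, C, fun v hv ε hε hεε₀ θ => ?_⟩
  obtain ⟨α, β, μ, ν, hB, hα, hβ, hμ, hν⟩ := hC₁ v hv ε hε (hεε₀.trans (min_le_right _ _))
  have hvV : |v| ≤ |V| := hv.trans (le_abs_self V)
  have hX : |(vb - v) / (4 * bScale vb l ^ 2)| ≤ (vb + |V|) / (4 * bScale vb l ^ 2) := by
    rw [abs_div, abs_of_pos h4b]
    gcongr
    exact (abs_sub _ _).trans (by rw [abs_of_pos hvb]; linarith)
  have hY : |(vb + v) / (4 * bScale vb l ^ 2)| ≤ (vb + |V|) / (4 * bScale vb l ^ 2) := by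
    rw [abs_div, abs_of_pos h4b]
    gcongr
    exact (abs_add_le _ _).trans (by rw [abs_of_pos hvb]; linarith)
  rw [hB, two_mul_sqrt_eq_four_mul_bScale_sq hvbEl.le, show
    √ε * -((v - vb) / (4 * bScale vb l ^ 2) * cos (2 * θ))
      = √ε * ((vb - v) / (4 * bScale vb l ^ 2)) * cos (2 * θ) by ring]
  exact hC ε hε (hεε₀.trans (min_le_left _ _)) α β μ ν _ _ hX hY hα hβ hμ hν θ

/-- telescoped expansion of the logarithm of the modified transfer matrix product. -/
theorem stmt12 (K : Set ℝ) (hK : IsCompact K) (vb : ℝ) (hvb : 0 < vb)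
    (l : ℕ) (hl : 1 ≤ l) (hleven : Even l) :
    ∃ ε₀ > (0:ℝ), ∃ C : ℝ, ∀ v : ℕ → ℝ, (∀ j, v j ∈ K) → ∀ ε : ℝ, 0 < ε → ε ≤ ε₀ →
      ∀ θ₀ ∈ Set.Ico (0 : ℝ) (2 * π), ∀ m n : ℕ, m ≤ n →
        |Real.log (vnormR ((Meps vb l ε * TprodR v (El l - ε) n m * (Meps vb l ε)⁻¹).mulVec
              (eth (pruefer vb l ε v θ₀ m))))
            - Real.sqrt ε * ∑ j ∈ Finset.Icc (m + 1) n,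
                (-(((v j - vb) / (2 * Real.sqrt (2 * vb * El l))) *
                    Real.cos (2 * pruefer vb l ε v θ₀ (j - 1))))|
          ≤ C * ((n : ℝ) - (m : ℝ)) * ε := by
  obtain ⟨V, hV⟩ := hK.isBounded.exists_norm_le
  obtain ⟨ε₀, hε₀, C, hstep⟩ := abs_log_vnormR_conj_TmatR_sub_le hvb hl hleven V
  refine ⟨ε₀, hε₀, C, fun v hv ε hε hεε₀ θ₀ _ m n hmn => ?_⟩
  have hb := bScale_pos (mul_pos hvb (El_pos (l := l) (by omega)))
  rw [log_vnormR_conj_TprodR_eq_sum (isUnit_det_Meps hb.ne' hε) v θ₀ hmn, mul_sum,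
    ← sum_sub_distrib]
  calc _ ≤ ∑ j ∈ Icc (m + 1) n, C * ε := (abs_sum_le_sum_abs _ _).trans
        (sum_le_sum fun j _ => hstep _ (hV _ (hv j)) ε hε hεε₀ _)
    _ = C * ((n : ℝ) - m) * ε := by
        rw [sum_const, Nat.card_Icc, nsmul_eq_mul, Nat.add_sub_add_right, Nat.cast_sub hmn]
        ring

end
end
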